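/- arXiv:1109.5132 — 2 statements merged into one kernel-verified Lean document; each statement's English description precedes it below -/
import Mathlib

section
/- Define m′(δ) = ∫₀^∞ ln(y(t)) · δ e^{−δ t} dt. Then m′(δ) ≥ ln c₂ + ν₁/δ for every δ > 0; in particular m′(δ) > 0 whenever 0 < δ < −ν₁/ln c₂. -/
/-!
Since `c₁ e^{ν₂ t} > 0`, we have `ln y(t) ≥ ln c₂ + ν₁ t` pointwise, and integrating this affine
lower bound against the exponential density `δ e^{-δ t}` gives exactly `ln c₂ + ν₁ / δ`.
-/

open MeasureTheory Real Set

lemma integral_exp_neg_mul_Ioi_zero {δ : ℝ} (hδ : 0 < δ) :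
    ∫ t in Ioi (0 : ℝ), exp (-δ * t) = 1 / δ := by
  rw [integral_exp_mul_Ioi (neg_neg_of_pos hδ)]
  simp [neg_div, div_neg]

lemma integral_mul_exp_neg_mul_Ioi_zero {δ : ℝ} (hδ : 0 < δ) :
    ∫ t in Ioi (0 : ℝ), t * exp (-δ * t) = 1 / δ ^ 2 := by
  have h := integral_rpow_mul_exp_neg_mul_Ioi (a := 2) two_pos hδ
  norm_num [Real.Gamma_two] at h
  simpa [neg_mul, one_div] using h

lemma integrableOn_mul_exp_neg_mul_Ioi {δ : ℝ} (hδ : 0 < δ) :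
    IntegrableOn (fun t : ℝ => t * exp (-δ * t)) (Ioi 0) := by
  simpa using integrableOn_rpow_mul_exp_neg_mul_rpow (s := 1) (p := 1) (by norm_num) one_pos hδ

lemma integrableOn_affine_mul_exponentialPDF {δ : ℝ} (hδ : 0 < δ) (a b : ℝ) :
    IntegrableOn (fun t => (a + b * t) * (δ * exp (-δ * t))) (Ioi 0) := by
  have h := ((exp_neg_integrableOn_Ioi 0 hδ).const_mul (a * δ)).add
    ((integrableOn_mul_exp_neg_mul_Ioi hδ).const_mul (b * δ))
  exact IntegrableOn.congr_fun h (fun t _ => by simp only [Pi.add_apply]; ring) measurableSet_Ioi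

lemma integral_affine_mul_exponentialPDF {δ : ℝ} (hδ : 0 < δ) (a b : ℝ) :
    ∫ t in Ioi (0 : ℝ), (a + b * t) * (δ * exp (-δ * t)) = a + b / δ := by
  have hsplit : ∀ t : ℝ, (a + b * t) * (δ * exp (-δ * t))
      = a * δ * exp (-δ * t) + b * δ * (t * exp (-δ * t)) := fun t => by ring
  simp_rw [hsplit]
  rw [integral_add ((exp_neg_integrableOn_Ioi 0 hδ).const_mul _)
      ((integrableOn_mul_exp_neg_mul_Ioi hδ).const_mul _),
    integral_const_mul, integral_const_mul, integral_exp_neg_mul_Ioi_zero hδ,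
    integral_mul_exp_neg_mul_Ioi_zero hδ]
  field_simp

lemma log_add_le_log_add_mul_exp {c u x : ℝ} (hc : 0 < c) (hu : 0 ≤ u) :
    log c + x ≤ log (u + c * exp x) := by
  rw [← log_exp x, ← log_mul hc.ne' (exp_pos x).ne', log_exp]
  exact log_le_log (by positivity) (le_add_of_nonneg_left hu)

theorem stmt_11_general (ν₁ ν₂ c₁ c₂ : ℝ)
    (hc₁ : c₁ ∈ Set.Ioo (0 : ℝ) 1) (hc₂ : c₂ = 1 - c₁)
    (y : ℝ → ℝ)
    (hy : y = fun t => c₁ * Real.exp (ν₂ * t) + c₂ * Real.exp (ν₁ * t))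
    (δ : ℝ) (hδ : 0 < δ)
    (hint : IntegrableOn (fun t => Real.log (y t) * (δ * Real.exp (-δ * t)))
      (Set.Ioi (0 : ℝ)) volume) :
    Real.log c₂ + ν₁ / δ ≤ ∫ t in Set.Ioi (0 : ℝ),
        Real.log (y t) * (δ * Real.exp (-δ * t)) ∧
    (δ < -ν₁ / Real.log c₂ →
      0 < ∫ t in Set.Ioi (0 : ℝ), Real.log (y t) * (δ * Real.exp (-δ * t))) := by
  obtain ⟨hc₁0, hc₁1⟩ := hc₁
  have hc₂0 : 0 < c₂ := by linarith
  have hlog_le : ∀ t ∈ Ioi (0 : ℝ), (log c₂ + ν₁ * t) * (δ * exp (-δ * t))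
      ≤ log (y t) * (δ * exp (-δ * t)) := fun t _ => by
    rw [hy]
    gcongr
    exact log_add_le_log_add_mul_exp hc₂0 (by positivity)
  have hbound : log c₂ + ν₁ / δ ≤ ∫ t in Ioi (0 : ℝ), log (y t) * (δ * exp (-δ * t)) := by
    rw [← integral_affine_mul_exponentialPDF hδ]
    exact setIntegral_mono_on (integrableOn_affine_mul_exponentialPDF hδ _ _) hint
      measurableSet_Ioi hlog_le
  refine ⟨hbound, fun hsmall => hbound.trans_lt' ?_⟩
  have hlog_neg : log c₂ < 0 := log_neg hc₂0 (by linarith)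
  have hν₁ : -log c₂ * δ < ν₁ := by
    have := (lt_div_iff_of_neg hlog_neg).mp hsmall
    linarith
  have : -log c₂ < ν₁ / δ := by rwa [lt_div_iff₀ hδ]
  linarith

/-- m′(δ) ≥ ln c₂ + ν₁/δ, and m′(δ) > 0 whenever 0 < δ < −ν₁/ln c₂. -/
theorem stmt_11 (ν₁ ν₂ c₁ c₂ : ℝ) (hν₂ : ν₂ < 0) (hν₁ : 0 < ν₁)
    (hc₁ : c₁ ∈ Set.Ioo (0 : ℝ) 1) (hc₂ : c₂ = 1 - c₁)
    (y : ℝ → ℝ)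
    (hy : y = fun t => c₁ * Real.exp (ν₂ * t) + c₂ * Real.exp (ν₁ * t))
    (δ : ℝ) (hδ : 0 < δ)
    (hint : IntegrableOn (fun t => Real.log (y t) * (δ * Real.exp (-δ * t)))
      (Set.Ioi (0 : ℝ)) volume) :
    Real.log c₂ + ν₁ / δ ≤ ∫ t in Set.Ioi (0 : ℝ),
        Real.log (y t) * (δ * Real.exp (-δ * t)) ∧
    (δ < -ν₁ / Real.log c₂ →
      0 < ∫ t in Set.Ioi (0 : ℝ), Real.log (y t) * (δ * Real.exp (-δ * t))) :=
  stmt_11_general ν₁ ν₂ c₁ c₂ hc₁ hc₂ y hy δ hδ hint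
end

section
/- Let m′(δ) = ∫₀^∞ ln(y(u/δ)) e^{−u} du. Then m′(δ) ≤ y′(0)/δ + (1/δ²)·2K/(1−ν₁/δ)³ for δ > ν₁, where K = 2·max(c₁ν₂², c₂ν₁²). Consequently, since y′(0) < 0, there exists δ₂ > 0 such that m′(δ) < 0 for all δ > δ₂. -/
/-!
Since `log y ≤ y - 1`, `m'(δ)` is at most `∫₀^∞ (y(u/δ) - 1) e^{-u} du`, which is the explicit
Laplace transform `c₁ / (1 - ν₂/δ) + c₂ / (1 - ν₁/δ) - 1`. Expanding
`1 / (1 - x) = 1 + x + x² / (1 - x)` to second order, the linear terms add up to `y'(0) / δ` and the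
remainders are `O(1/δ²)`; as `y'(0) = -b < 0`, the first term wins for large `δ`.
-/

open MeasureTheory Filter Topology Set Real

lemma integrableOn_exp_mul_mul_exp_neg {x : ℝ} (hx : x < 1) :
    IntegrableOn (fun u => exp (x * u) * exp (-u)) (Ioi 0) := by
  simp_rw [← exp_add, show ∀ u, x * u + -u = (x - 1) * u from fun u => by ring]
  exact integrableOn_exp_mul_Ioi (by linarith) 0

lemma integral_exp_mul_mul_exp_neg {x : ℝ} (hx : x < 1) :
    ∫ u in Ioi 0, exp (x * u) * exp (-u) = (1 - x)⁻¹ := by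
  simp_rw [← exp_add, show ∀ u, x * u + -u = (x - 1) * u from fun u => by ring]
  rw [integral_exp_mul_Ioi (by linarith), mul_zero, exp_zero, neg_div, ← div_neg, neg_sub,
    one_div]

section TwoExponentials

variable {c₁ c₂ x₁ x₂ : ℝ}

lemma two_exp_sub_one_mul_exp_neg (u : ℝ) :
    (c₁ * exp (x₁ * u) + c₂ * exp (x₂ * u) - 1) * exp (-u) =
      c₁ * (exp (x₁ * u) * exp (-u)) + c₂ * (exp (x₂ * u) * exp (-u)) - exp (-u) := by
  ring

lemma integrableOn_two_exp_sub_one_mul_exp_neg (h₁ : x₁ < 1) (h₂ : x₂ < 1) :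
    IntegrableOn (fun u => (c₁ * exp (x₁ * u) + c₂ * exp (x₂ * u) - 1) * exp (-u)) (Ioi 0) := by
  simp_rw [two_exp_sub_one_mul_exp_neg]
  exact (((integrableOn_exp_mul_mul_exp_neg h₁).const_mul c₁).add
    ((integrableOn_exp_mul_mul_exp_neg h₂).const_mul c₂)).sub (integrableOn_exp_neg_Ioi 0)

lemma integral_two_exp_sub_one_mul_exp_neg (h₁ : x₁ < 1) (h₂ : x₂ < 1) :
    ∫ u in Ioi 0, (c₁ * exp (x₁ * u) + c₂ * exp (x₂ * u) - 1) * exp (-u) =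
      c₁ * (1 - x₁)⁻¹ + c₂ * (1 - x₂)⁻¹ - 1 := by
  have i₁ := (integrableOn_exp_mul_mul_exp_neg h₁).const_mul c₁
  have i₂ := (integrableOn_exp_mul_mul_exp_neg h₂).const_mul c₂
  have i₁₂ : IntegrableOn
      (fun u => c₁ * (exp (x₁ * u) * exp (-u)) + c₂ * (exp (x₂ * u) * exp (-u))) (Ioi 0) :=
    i₁.add i₂
  simp_rw [two_exp_sub_one_mul_exp_neg]
  rw [integral_sub i₁₂ (integrableOn_exp_neg_Ioi 0), integral_add i₁ i₂,
    integral_const_mul, integral_const_mul, integral_exp_mul_mul_exp_neg h₁,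
    integral_exp_mul_mul_exp_neg h₂, integral_exp_neg_Ioi_zero]

end TwoExponentials

lemma setIntegral_log_mul_le_sub_one_mul {α : Type*} [MeasurableSpace α] {μ : Measure α}
    {s : Set α} {g w : α → ℝ} {m : ℝ} (hs : MeasurableSet s) (hm : 0 < m)
    (hgm : ∀ u ∈ s, m ≤ g u) (hg : Measurable g) (hw : IntegrableOn w s μ)
    (hw₀ : ∀ u ∈ s, 0 ≤ w u) (hgw : IntegrableOn (fun u => (g u - 1) * w u) s μ) :
    ∫ u in s, log (g u) * w u ∂μ ≤ ∫ u in s, (g u - 1) * w u ∂μ := by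
  have hlog_le : ∀ u ∈ s, log (g u) ≤ g u - 1 := fun u hu =>
    log_le_sub_one_of_pos (hm.trans_le (hgm u hu))
  have hint : IntegrableOn (fun u => log (g u) * w u) s μ := by
    refine ((hw.const_mul |log m|).add hgw.norm).mono'
      ((measurable_log.comp hg).aestronglyMeasurable.mul hw.aestronglyMeasurable)
      ((ae_restrict_iff' hs).2 (Eventually.of_forall fun u hu => ?_))
    have habs : |log (g u)| ≤ |log m| + |g u - 1| := by
      have hlow : log m ≤ log (g u) := log_le_log hm (hgm u hu)
      rw [abs_le]
      constructor <;> linarith [neg_abs_le (log m), le_abs_self (g u - 1), abs_nonneg (g u - 1),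
        abs_nonneg (log m), hlog_le u hu]
    simp only [Pi.add_apply, norm_mul, Real.norm_eq_abs, abs_of_nonneg (hw₀ u hu), ← add_mul]
    exact mul_le_mul_of_nonneg_right habs (hw₀ u hu)
  exact setIntegral_mono_on hint hgw hs fun u hu =>
    mul_le_mul_of_nonneg_right (hlog_le u hu) (hw₀ u hu)

lemma inv_one_sub_eq {x : ℝ} (hx : x ≠ 1) : (1 - x)⁻¹ = 1 + x + x ^ 2 * (1 - x)⁻¹ := by
  have : 1 - x ≠ 0 := sub_ne_zero.2 hx.symm
  field_simp
  ring

lemma two_exp_laplace_le {c₁ c₂ ν₁ ν₂ δ K : ℝ} (hc₁ : 0 ≤ c₁) (hc₂ : 0 ≤ c₂) (hc : c₁ + c₂ = 1)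
    (hν : ν₂ ≤ ν₁) (hν₁ : 0 ≤ ν₁) (hδ : ν₁ < δ) (hK₁ : c₁ * ν₂ ^ 2 ≤ K) (hK₂ : c₂ * ν₁ ^ 2 ≤ K) :
    c₁ * (1 - ν₂ / δ)⁻¹ + c₂ * (1 - ν₁ / δ)⁻¹ - 1 ≤
      (c₁ * ν₂ + c₂ * ν₁) / δ + 1 / δ ^ 2 * (2 * K / (1 - ν₁ / δ) ^ 3) := by
  have hδ₀ : 0 < δ := hν₁.trans_lt hδ
  have hr : 0 < 1 - ν₁ / δ := by rw [sub_pos, div_lt_one hδ₀]; exact hδ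
  have hr₁ : 1 - ν₁ / δ ≤ 1 := by have := div_nonneg hν₁ hδ₀.le; linarith
  have term_le : ∀ {c ν : ℝ}, 0 ≤ c → ν ≤ ν₁ → c * ν ^ 2 ≤ K →
      c * (1 - ν / δ)⁻¹ ≤ c + c * ν / δ + 1 / δ ^ 2 * (K / (1 - ν₁ / δ) ^ 3) := by
    intro c ν hc hν hcK
    have hx : 1 - ν₁ / δ ≤ 1 - ν / δ := by gcongr
    have hinv : (1 - ν / δ)⁻¹ ≤ ((1 - ν₁ / δ) ^ 3)⁻¹ :=
      inv_anti₀ (pow_pos hr 3) ((pow_le_of_le_one hr.le hr₁ three_ne_zero).trans hx)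
    have hmain : c * ν ^ 2 * (1 - ν / δ)⁻¹ ≤ K * ((1 - ν₁ / δ) ^ 3)⁻¹ :=
      mul_le_mul hcK hinv (inv_pos.2 (hr.trans_le hx)).le ((mul_nonneg hc (sq_nonneg ν)).trans hcK)
    rw [inv_one_sub_eq (by linarith)]
    calc c * (1 + ν / δ + (ν / δ) ^ 2 * (1 - ν / δ)⁻¹)
        = c + c * ν / δ + 1 / δ ^ 2 * (c * ν ^ 2 * (1 - ν / δ)⁻¹) := by ring
      _ ≤ _ := by rw [div_eq_mul_inv K]; gcongr
  have h₁ := term_le hc₁ hν hK₁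
  have h₂ := term_le hc₂ le_rfl hK₂
  calc _ ≤ c₁ + c₁ * ν₂ / δ + 1 / δ ^ 2 * (K / (1 - ν₁ / δ) ^ 3)
        + (c₂ + c₂ * ν₁ / δ + 1 / δ ^ 2 * (K / (1 - ν₁ / δ) ^ 3)) - 1 := by linarith
    _ = _ := by rw [← hc]; ring

lemma eventually_neg_div_add_one_div_sq_mul_neg {b L : ℝ} {g : ℝ → ℝ} (hb : 0 < b)
    (hg : Tendsto g atTop (𝓝 L)) : ∀ᶠ δ in atTop, -b / δ + 1 / δ ^ 2 * g δ < 0 := by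
  have hlim : Tendsto (fun δ => -b + δ⁻¹ * g δ) atTop (𝓝 (-b + 0 * L)) :=
    tendsto_const_nhds.add (tendsto_inv_atTop_zero.mul hg)
  filter_upwards [hlim.eventually (gt_mem_nhds (by linarith : -b + 0 * L < 0)),
    eventually_gt_atTop 0] with δ hneg hδ
  have : -b / δ + 1 / δ ^ 2 * g δ = (-b + δ⁻¹ * g δ) / δ := by field_simp
  rw [this]
  exact div_neg_of_neg_of_pos hneg hδ

lemma integral_log_two_exp_mul_exp_neg_le {c₁ c₂ ν₁ ν₂ δ K : ℝ} (hc₁ : 0 ≤ c₁) (hc₂ : 0 < c₂)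
    (hc : c₁ + c₂ = 1) (hν : ν₂ ≤ ν₁) (hν₁ : 0 ≤ ν₁) (hδ : ν₁ < δ) (hK₁ : c₁ * ν₂ ^ 2 ≤ K)
    (hK₂ : c₂ * ν₁ ^ 2 ≤ K) :
    ∫ u in Ioi 0, log (c₁ * exp (ν₂ * (u / δ)) + c₂ * exp (ν₁ * (u / δ))) * exp (-u) ≤
      (c₁ * ν₂ + c₂ * ν₁) / δ + 1 / δ ^ 2 * (2 * K / (1 - ν₁ / δ) ^ 3) := by
  have hδ₀ : 0 < δ := hν₁.trans_lt hδ
  have h₁ : ν₁ / δ < 1 := (div_lt_one hδ₀).2 hδ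
  have h₂ : ν₂ / δ < 1 := (div_lt_one hδ₀).2 (hν.trans_lt hδ)
  have hlow : ∀ u ∈ Ioi (0 : ℝ), c₂ ≤ c₁ * exp (ν₂ / δ * u) + c₂ * exp (ν₁ / δ * u) := by
    intro u hu
    have : 1 ≤ exp (ν₁ / δ * u) := one_le_exp (mul_nonneg (div_nonneg hν₁ hδ₀.le) (le_of_lt hu))
    nlinarith [mul_nonneg hc₁ (exp_pos (ν₂ / δ * u)).le]
  simp only [show ∀ ν u : ℝ, ν * (u / δ) = ν / δ * u from fun _ _ => by ring]
  calc _ ≤ ∫ u in Ioi 0, (c₁ * exp (ν₂ / δ * u) + c₂ * exp (ν₁ / δ * u) - 1) * exp (-u) :=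
        setIntegral_log_mul_le_sub_one_mul measurableSet_Ioi hc₂ hlow (by fun_prop)
          (integrableOn_exp_neg_Ioi 0) (fun u _ => (exp_pos _).le)
          (integrableOn_two_exp_sub_one_mul_exp_neg h₂ h₁)
    _ = c₁ * (1 - ν₂ / δ)⁻¹ + c₂ * (1 - ν₁ / δ)⁻¹ - 1 := integral_two_exp_sub_one_mul_exp_neg h₂ h₁
    _ ≤ _ := two_exp_laplace_le hc₁ hc₂.le hc hν hν₁ hδ hK₁ hK₂

theorem stmt_15_general (b : ℝ) (hb : 0 < b)
    (ν₁ ν₂ c₁ c₂ : ℝ) (hν₁pos : 0 < ν₁) (hν₂neg : ν₂ < 0)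
    (hc₁ : c₁ ∈ Set.Ioo (0 : ℝ) 1) (hc₂ : c₂ = 1 - c₁)
    (hderiv0 : c₁ * ν₂ + c₂ * ν₁ = -b)
    (y : ℝ → ℝ)
    (hy : y = fun t => c₁ * Real.exp (ν₂ * t) + c₂ * Real.exp (ν₁ * t))
    (K : ℝ) (hK : K = 2 * max (c₁ * ν₂ ^ 2) (c₂ * ν₁ ^ 2))
    (m' : ℝ → ℝ)
    (hm' : m' = fun δ => ∫ u in Set.Ioi (0 : ℝ), Real.log (y (u / δ)) * Real.exp (-u)) :
    (∀ δ : ℝ, ν₁ < δ →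
      m' δ ≤ (-b) / δ + (1 / δ ^ 2) * (2 * K / (1 - ν₁ / δ) ^ 3)) ∧
    ∃ δ₂ : ℝ, 0 < δ₂ ∧ ∀ δ : ℝ, δ₂ < δ → m' δ < 0 := by
  obtain ⟨hc₁₀, hc₁₁⟩ := hc₁
  have hc₂₀ : 0 < c₂ := by linarith
  have hK₁ : c₁ * ν₂ ^ 2 ≤ K := by
    linarith [le_max_left (c₁ * ν₂ ^ 2) (c₂ * ν₁ ^ 2), mul_nonneg hc₁₀.le (sq_nonneg ν₂)]
  have hK₂ : c₂ * ν₁ ^ 2 ≤ K := by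
    linarith [le_max_right (c₁ * ν₂ ^ 2) (c₂ * ν₁ ^ 2), mul_nonneg hc₂₀.le (sq_nonneg ν₁)]
  have bound : ∀ δ : ℝ, ν₁ < δ → m' δ ≤ -b / δ + 1 / δ ^ 2 * (2 * K / (1 - ν₁ / δ) ^ 3) := by
    intro δ hδ
    rw [hm', hy, ← hderiv0]
    exact integral_log_two_exp_mul_exp_neg_le hc₁₀.le hc₂₀ (by linarith) (by linarith)
      hν₁pos.le hδ hK₁ hK₂
  have hlim : Tendsto (fun δ => 2 * K / (1 - ν₁ / δ) ^ 3) atTop (𝓝 (2 * K / (1 - 0) ^ 3)) :=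
    tendsto_const_nhds.div
      ((tendsto_const_nhds.sub (tendsto_const_nhds.div_atTop tendsto_id)).pow 3) (by norm_num)
  obtain ⟨δ₀, hδ₀⟩ := eventually_atTop.1
    ((eventually_gt_atTop ν₁).and (eventually_neg_div_add_one_div_sq_mul_neg hb hlim))
  refine ⟨bound, max δ₀ 1, by positivity, fun δ hδ => ?_⟩
  obtain ⟨hν₁δ, hneg⟩ := hδ₀ δ ((le_max_left _ _).trans hδ.le)
  exact (bound δ hν₁δ).trans_lt hneg

/-- m′(δ) = ∫₀^∞ ln(y(u/δ)) e^{−u} du satisfies m′(δ) ≤ y′(0)/δ + (1/δ²)·2K/(1−ν₁/δ)³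
for δ > ν₁; consequently, since y′(0) = −b < 0, m′(δ) < 0 for all large δ. -/
theorem stmt_15 (a b lam : ℝ) (ha : 0 < a) (hb : 0 < b) (hlam : 0 < lam)
    (ν₁ ν₂ c₁ c₂ : ℝ) (hν₁pos : 0 < ν₁) (hν₂neg : ν₂ < 0)
    (hroot₁ : ν₁ ^ 2 + (a + b - lam) * ν₁ - b * lam = 0)
    (hroot₂ : ν₂ ^ 2 + (a + b - lam) * ν₂ - b * lam = 0)
    (hc₁ : c₁ ∈ Set.Ioo (0 : ℝ) 1) (hc₂ : c₂ = 1 - c₁)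
    (hderiv0 : c₁ * ν₂ + c₂ * ν₁ = -b)
    (y : ℝ → ℝ)
    (hy : y = fun t => c₁ * Real.exp (ν₂ * t) + c₂ * Real.exp (ν₁ * t))
    (K : ℝ) (hK : K = 2 * max (c₁ * ν₂ ^ 2) (c₂ * ν₁ ^ 2))
    (m' : ℝ → ℝ)
    (hm' : m' = fun δ => ∫ u in Set.Ioi (0 : ℝ), Real.log (y (u / δ)) * Real.exp (-u)) :
    (∀ δ : ℝ, ν₁ < δ →
      m' δ ≤ (-b) / δ + (1 / δ ^ 2) * (2 * K / (1 - ν₁ / δ) ^ 3)) ∧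
    ∃ δ₂ : ℝ, 0 < δ₂ ∧ ∀ δ : ℝ, δ₂ < δ → m' δ < 0 :=
  stmt_15_general b hb ν₁ ν₂ c₁ c₂ hν₁pos hν₂neg hc₁ hc₂ hderiv0 y hy K hK m' hm'
end
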